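/- Let F be a field of characteristic zero and let Δ = δ_0 ∘ {P_1(D),...,P_n(D)} be interpolation conditions given by polynomials P_1,...,P_n ∈ F[x_1,...,x_d]. If T = {X^{β_1},...,X^{β_n}} is a monomial interpolating basis for Δ, then for each i with 1 ≤ i ≤ n there exists a monomial X^{α_i} occurring with nonzero coefficient in P_i such that X^{α_i} ∈ T; that is, Λ{P_i} ∩ T ≠ ∅ for every i. -/

import Mathlib

/-!
`D^α X^β` is `0` unless `α ≤ β`, and is then a multiple of `X^(β - α)`, which vanishes at `0`
unless `α = β`. So `δ₀ ∘ P(D)` sends `X^β` to `β! · P̂(β)`. If no monomial of `T` occurs in `P_i`,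
the functional `λ_i` therefore vanishes on `span T`, and no element of `span T` takes the values
`λ_i = 1`, `λ_j = 0` for `j ≠ i`.
-/

open MvPolynomial

/-- The iterated partial derivative operator `D^α = ∂^{α_1}_{x_1} ⋯ ∂^{α_d}_{x_d}`. -/
noncomputable def Dmon (F : Type*) [CommSemiring F] {d : ℕ} (α : Fin d →₀ ℕ) :
    Module.End F (MvPolynomial (Fin d) F) :=
  ((List.finRange d).map fun i =>
    ((pderiv i : Derivation F (MvPolynomial (Fin d) F) (MvPolynomial (Fin d) F)) :
      MvPolynomial (Fin d) F →ₗ[F] MvPolynomial (Fin d) F) ^ (α i)).prod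

/-- The differential operator `P(D) = Σ_α P̂(α) D^α` induced by a polynomial `P`. -/
noncomputable def PD {F : Type*} [Field F] {d : ℕ} (P : MvPolynomial (Fin d) F) :
    Module.End F (MvPolynomial (Fin d) F) :=
  ∑ α ∈ P.support, P.coeff α • Dmon F α

/-- The linear functional `δ₀ ∘ P(D) : g ↦ (P(D) g)(0)`. -/
noncomputable def delta0PD {F : Type*} [Field F] {d : ℕ} (P : MvPolynomial (Fin d) F) :
    MvPolynomial (Fin d) F →ₗ[F] F :=
  (MvPolynomial.aeval (0 : Fin d → F)).toLinearMap ∘ₗ PD P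

/-- `prec` is a monomial ordering: a linear well-ordering of the monomials (identified with
their exponent vectors) that is compatible with multiplication of monomials. -/
structure IsMonomialOrder {d : ℕ} (prec : (Fin d →₀ ℕ) → (Fin d →₀ ℕ) → Prop) : Prop where
  irrefl : ∀ a, ¬ prec a a
  trans : ∀ a b c, prec a b → prec b c → prec a c
  total : ∀ a b, a ≠ b → prec a b ∨ prec b a
  wf : WellFounded prec
  add_compat : ∀ a b c, prec a b → prec (a + c) (b + c)

/-- `m` is the `prec`-least monomial occurring in `P` with nonzero coefficient,
i.e. `X^m = lm(P)`. -/
def IsLeastMon {F : Type*} [Field F] {d : ℕ} (prec : (Fin d →₀ ℕ) → (Fin d →₀ ℕ) → Prop)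
    (P : MvPolynomial (Fin d) F) (m : Fin d →₀ ℕ) : Prop :=
  m ∈ P.support ∧ ∀ m' ∈ P.support, m' ≠ m → prec m m'

/-- `{P_1, ..., P_n}` is a "reverse" reduced basis w.r.t. `prec`: the `P_i` are linearly
independent and `lm(P_i) ∉ Λ{P_j}` for all `i < j`. -/
def IsRevReducedBasis {F : Type*} [Field F] {d n : ℕ}
    (prec : (Fin d →₀ ℕ) → (Fin d →₀ ℕ) → Prop) (P : Fin n → MvPolynomial (Fin d) F) : Prop :=
  LinearIndependent F P ∧
    ∀ i j : Fin n, i < j → ∀ m, IsLeastMon prec (P i) m → m ∉ (P j).support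

/-- `T = {X^{β_1}, ..., X^{β_n}}` (indexed by the injective family `β`) is a monomial
interpolating basis for the interpolation conditions `lam_1, ..., lam_n`: for every vector of
values `f` there is a unique `g` in the span of `T` with `lam i g = f i` for all `i`. -/
def IsMonIntBasisFam {F : Type*} [Field F] {d n : ℕ}
    (lam : Fin n → (MvPolynomial (Fin d) F →ₗ[F] F)) (β : Fin n → (Fin d →₀ ℕ)) : Prop :=
  ∀ f : Fin n → F, ∃! g : MvPolynomial (Fin d) F,
    g ∈ Submodule.span F (Set.range fun j => (monomial (β j) (1 : F) : MvPolynomial (Fin d) F))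
      ∧ ∀ i, lam i g = f i

section Dmon

variable {R : Type*} [CommSemiring R] {σ : Type*}

theorem pderiv_pow_monomial (i : σ) (k : ℕ) (s : σ →₀ ℕ) (a : R) :
    ((pderiv i).toLinearMap ^ k) (monomial s a) =
      monomial (s - Finsupp.single i k) (a * (s i).descFactorial k) := by
  classical
  induction k with
  | zero => simp
  | succ k ih =>
    rw [pow_succ', Module.End.mul_apply, ih, Derivation.coeFn_coe, pderiv_monomial,
      tsub_tsub, ← Finsupp.single_add, Finsupp.tsub_apply, Finsupp.single_eq_same,
      Nat.descFactorial_succ]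
    push_cast
    ring_nf

theorem list_prod_pderiv_pow_monomial (α s : σ →₀ ℕ) (a : R) {L : List σ} (hL : L.Nodup) :
    ((L.map fun i => (pderiv i).toLinearMap ^ α i).prod) (monomial s a) =
      monomial (s - (L.map fun i => Finsupp.single i (α i)).sum)
        (a * (L.map fun i => ((s i).descFactorial (α i) : R)).prod) := by
  classical
  induction L with
  | nil => simp
  | cons i L ih =>
    obtain ⟨hiL, hL⟩ := List.nodup_cons.mp hL
    have hsi : (s - (L.map fun j => Finsupp.single j (α j)).sum) i = s i := by
      have h0 : (L.map fun j => Finsupp.single j (α j)).sum i = 0 := by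
        change Finsupp.applyAddHom i _ = 0
        rw [map_list_sum, List.map_map]
        refine List.sum_eq_zero fun x hx => ?_
        obtain ⟨j, hj, rfl⟩ := List.mem_map.mp hx
        exact Finsupp.single_eq_of_ne (by rintro rfl; exact hiL hj)
      rw [Finsupp.tsub_apply, h0, tsub_zero]
    rw [List.map_cons, List.prod_cons, Module.End.mul_apply, ih hL, pderiv_pow_monomial, hsi,
      List.map_cons, List.sum_cons, List.map_cons, List.prod_cons, tsub_tsub, add_comm]
    ring_nf

theorem Dmon_monomial {d : ℕ} (α s : Fin d →₀ ℕ) (a : R) :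
    Dmon R α (monomial s a) =
      monomial (s - α) (a * ∏ i, ((s i).descFactorial (α i) : R)) := by
  rw [Dmon, list_prod_pderiv_pow_monomial α s a (List.nodup_finRange d), ← Fin.sum_univ_def,
    ← Fin.prod_univ_def, Finsupp.univ_sum_single]

theorem constantCoeff_Dmon_monomial {d : ℕ} (α s : Fin d →₀ ℕ) (a : R) :
    constantCoeff (Dmon R α (monomial s a)) =
      if α = s then a * ∏ i, ((s i).factorial : R) else 0 := by
  classical
  rw [Dmon_monomial, constantCoeff_monomial]
  split_ifs with hsα hαs hαs
  · subst hαs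
    simp [Nat.descFactorial_self]
  · obtain ⟨i, hi⟩ : ∃ i, s i < α i := by
      by_contra! h
      exact hαs (le_antisymm (Finsupp.le_def.mpr h) (tsub_eq_zero_iff_le.mp hsα))
    rw [Finset.prod_eq_zero (Finset.mem_univ i) (by simp [Nat.descFactorial_eq_zero_iff_lt.mpr hi]),
      mul_zero]
  · simp [hαs] at hsα
  · rfl

end Dmon

theorem delta0PD_monomial {F : Type*} [Field F] {d : ℕ} (P : MvPolynomial (Fin d) F)
    (s : Fin d →₀ ℕ) (a : F) :
    delta0PD P (monomial s a) = P.coeff s * a * ∏ i, ((s i).factorial : F) := by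
  rw [delta0PD, LinearMap.comp_apply, PD, LinearMap.coe_sum, Finset.sum_apply, map_sum]
  simp only [LinearMap.smul_apply, map_smul, AlgHom.toLinearMap_apply, aeval_zero,
    Algebra.algebraMap_self, RingHom.id_apply, constantCoeff_Dmon_monomial, smul_eq_mul, mul_ite,
    mul_zero, Finset.sum_ite_eq', ← mul_assoc]
  split_ifs with hs
  · rfl
  · rw [notMem_support_iff.mp hs, zero_mul, zero_mul]

theorem interpCond_contains_basisMonomial_general {F : Type*} [Field F] {d n : ℕ}
    (P : Fin n → MvPolynomial (Fin d) F)
    (β : Fin n → (Fin d →₀ ℕ))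
    (hT : IsMonIntBasisFam (fun i => delta0PD (P i)) β) :
    ∀ i : Fin n, ∃ j : Fin n, β j ∈ (P i).support := by
  intro i
  by_contra! hP
  obtain ⟨g, ⟨hg, hgi⟩, -⟩ := hT (Pi.single i 1)
  have hker : Submodule.span F (Set.range fun j => (monomial (β j) (1 : F))) ≤
      LinearMap.ker (delta0PD (P i)) := by
    refine Submodule.span_le.mpr ?_
    rintro _ ⟨j, rfl⟩
    simp [delta0PD_monomial, notMem_support_iff.mp (hP j)]
  simpa [LinearMap.mem_ker.mp (hker hg)] using hgi i

/-- If `T = {X^{β_1}, ..., X^{β_n}}` is a monomial interpolating basis for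
`Δ = δ₀ ∘ {P_1(D), ..., P_n(D)}`, then each `P_i` contains at least one monomial of `T` with
nonzero coefficient, i.e. `Λ{P_i} ∩ T ≠ ∅` for every `i`. -/
theorem interpCond_contains_basisMonomial {F : Type*} [Field F] [CharZero F] {d n : ℕ}
    (P : Fin n → MvPolynomial (Fin d) F)
    (β : Fin n → (Fin d →₀ ℕ)) (hβ : Function.Injective β)
    (hT : IsMonIntBasisFam (fun i => delta0PD (P i)) β) :
    ∀ i : Fin n, ∃ j : Fin n, β j ∈ (P i).support :=
  interpCond_contains_basisMonomial_general P β hT
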